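/- arXiv:1608.07089 — 3 statements merged into one kernel-verified Lean document; each statement's English description precedes it below -/
import Mathlib

section
/- Let M be an m×m real symmetric matrix that is negative definite and has nonnegative off-diagonal entries (M_{ij} ≥ 0 for all i ≠ j). Then every entry of the inverse matrix M⁻¹ is nonpositive. -/
open scoped Matrix

private lemma max_mul_sub_self (a : ℝ) : max a 0 * (max a 0 - a) = 0 := by
  rcases le_total a 0 with h | h
  · rw [max_eq_right h, zero_mul]
  · rw [max_eq_left h, sub_self, mul_zero]

theorem inv_entries_nonpos_of_negdef_offdiag_nonneg
    (m : ℕ) (M : Matrix (Fin m) (Fin m) ℝ)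
    (hsymm : M.IsSymm)
    (hnegdef : ∀ x : Fin m → ℝ, x ≠ 0 → x ⬝ᵥ M.mulVec x < 0)
    (hoffdiag : ∀ i j : Fin m, i ≠ j → 0 ≤ M i j) :
    ∀ i j : Fin m, M⁻¹ i j ≤ 0 := by
  have hdet : M.det ≠ 0 := by
    intro h0
    obtain ⟨v, hv, hMv⟩ := Matrix.exists_mulVec_eq_zero_iff.mpr h0
    have := hnegdef v hv
    rw [hMv, dotProduct_zero] at this
    exact lt_irrefl 0 this
  intro i j
  set x : Fin m → ℝ := fun k => M⁻¹ k j with hxdef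
  have hMx : M.mulVec x = Pi.single j 1 := by
    have hx : x = M⁻¹.mulVec (Pi.single j 1) := by
      funext k
      simp [hxdef, Matrix.mulVec_single]
    rw [hx, Matrix.mulVec_mulVec,
      Matrix.mul_nonsing_inv M (isUnit_iff_ne_zero.mpr hdet), Matrix.one_mulVec]
  set y : Fin m → ℝ := fun k => max (x k) 0 with hydef
  have hy0 : y = 0 := by
    by_contra hy
    have h1 := hnegdef y hy
    have hsplit : y ⬝ᵥ M.mulVec y = y ⬝ᵥ M.mulVec (y - x) + y ⬝ᵥ M.mulVec x := by
      rw [← dotProduct_add, ← Matrix.mulVec_add, sub_add_cancel]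
    have h2 : 0 ≤ y ⬝ᵥ M.mulVec (y - x) := by
      simp only [dotProduct, Matrix.mulVec]
      apply Finset.sum_nonneg
      intro a _
      rw [Finset.mul_sum]
      apply Finset.sum_nonneg
      intro b _
      by_cases hab : a = b
      · subst hab
        have : y a * (M a a * ((y - x) a)) = M a a * (y a * (y a - x a)) := by
          simp [Pi.sub_apply]; ring
        rw [this, show y a * (y a - x a) = max (x a) 0 * (max (x a) 0 - x a) from rfl,
          max_mul_sub_self, mul_zero]
      · have hy_nonneg : 0 ≤ y a := le_max_right _ _
        have hyx : 0 ≤ (y - x) b := by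
          simp only [Pi.sub_apply, hydef, sub_nonneg]
          exact le_max_left _ _
        exact mul_nonneg hy_nonneg (mul_nonneg (hoffdiag a b hab) hyx)
    have h3 : y ⬝ᵥ M.mulVec x = y j := by
      rw [hMx]
      simp [dotProduct, Pi.single_apply]
    have h4 : 0 ≤ y j := le_max_right _ _
    rw [hsplit, h3] at h1
    linarith
  have := congrFun hy0 i
  simp only [hydef, Pi.zero_apply] at this
  have hxi : x i ≤ max (x i) 0 := le_max_left _ _
  rw [this] at hxi
  exact hxi
end

section
/- Let M be an m×m real symmetric negative definite matrix with nonnegative off-diagonal entries, and let c ∈ ℝ^m be a vector with all entries c_i ≤ 0. Then the unique solution a of the linear system M a = c has all entries a_i ≥ 0. -/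
open scoped Matrix

theorem solution_nonneg_of_negdef_offdiag_nonneg
    (m : ℕ) (M : Matrix (Fin m) (Fin m) ℝ)
    (hsymm : M.IsSymm)
    (hnegdef : ∀ x : Fin m → ℝ, x ≠ 0 → x ⬝ᵥ M.mulVec x < 0)
    (hoffdiag : ∀ i j : Fin m, i ≠ j → 0 ≤ M i j)
    (c : Fin m → ℝ) (hc : ∀ i, c i ≤ 0)
    (a : Fin m → ℝ) (ha : M.mulVec a = c) :
    ∀ i, 0 ≤ a i := by
  classical
  set p : Fin m → ℝ := fun i => max (a i) 0 with hp
  set x : Fin m → ℝ := fun i => max (-(a i)) 0 with hx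
  have hx0 : ∀ i, 0 ≤ x i := fun i => le_max_right _ _
  have hp0 : ∀ i, 0 ≤ p i := fun i => le_max_right _ _
  have hpx : p = a + x := by
    funext i
    rcases le_total (a i) 0 with h | h
    · simp [hp, hx, max_eq_right h, max_eq_left (neg_nonneg.mpr h)]
    · simp [hp, hx, max_eq_left h, max_eq_right (neg_nonpos.mpr h)]
  have hxp : ∀ i, x i * p i = 0 := by
    intro i
    rcases le_total (a i) 0 with h | h
    · simp [hp, max_eq_right h]
    · simp [hx, max_eq_right (neg_nonpos.mpr h)]
  have h1 : x ⬝ᵥ M.mulVec a ≤ 0 := by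
    rw [ha]
    exact Finset.sum_nonpos fun i _ => mul_nonpos_of_nonneg_of_nonpos (hx0 i) (hc i)
  have h2 : 0 ≤ x ⬝ᵥ M.mulVec p := by
    simp only [dotProduct, Matrix.mulVec, Finset.mul_sum]
    refine Finset.sum_nonneg fun i _ => Finset.sum_nonneg fun j _ => ?_
    rcases eq_or_ne i j with rfl | hij
    · have : x i * (M i i * p i) = M i i * (x i * p i) := by ring
      rw [this, hxp i, mul_zero]
    · exact mul_nonneg (hx0 i) (mul_nonneg (hoffdiag i j hij) (hp0 j))
  have h3 : 0 ≤ x ⬝ᵥ M.mulVec x := by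
    have : x ⬝ᵥ M.mulVec p = x ⬝ᵥ M.mulVec a + x ⬝ᵥ M.mulVec x := by
      rw [hpx, Matrix.mulVec_add, dotProduct_add]
    linarith
  have hx0' : x = 0 := by
    by_contra hne
    exact absurd h3 (not_le.mpr (hnegdef x hne))
  intro i
  have : x i = 0 := congrFun hx0' i
  have h4 : -(a i) ≤ 0 := by
    calc -(a i) ≤ x i := le_max_left _ _
    _ = 0 := this
  linarith
end

section
/- Let B be a symmetric bilinear form of signature (1, m) on a real vector space E, let P, P', N, N' ∈ E and suppose: (i) α = P + N = P' + N'; (ii) N and N' lie in the convex cone generated by vectors D₁, …, D_r ∈ E on whose span B is negative definite and which satisfy B(D_i, D_j) ≥ 0 for i ≠ j; (iii) B(P, D_i) ≥ 0 and B(P', D_i) ≥ 0 for all i; (iv) B(P, N) = 0 and B(P', N') = 0. Then P = P' and N = N'. -/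
/-! The difference `N - N' = P' - P` lies in the span of the `D i`, and
`B (N - N') (N - N') = B (P' - P) (N - N') = B P' N + B P N' ≥ 0` because `P` and `P'` are
nonnegative on the cone spanned by the `D i`. Negative definiteness on that span forces
`N = N'`, and then `P = P'`. -/

namespace LinearMap

variable {R M ι : Type*} [CommRing R] [PartialOrder R] [IsOrderedRing R]
  [AddCommGroup M] [Module R M]

theorem apply_sum_smul_nonneg [Fintype ι] (f : M →ₗ[R] R) {v : ι → M} {a : ι → R}
    (ha : ∀ i, 0 ≤ a i) (hf : ∀ i, 0 ≤ f (v i)) : 0 ≤ f (∑ i, a i • v i) := by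
  rw [map_sum]
  exact Finset.sum_nonneg fun i _ => by
    simpa only [map_smul, smul_eq_mul] using mul_nonneg (ha i) (hf i)

theorem self_apply_sub_nonneg_of_add_eq_add (B : M →ₗ[R] M →ₗ[R] R) {P P' N N' : M}
    (hdec : P + N = P' + N') (hPN : B P N = 0) (hP'N' : B P' N' = 0)
    (hP'N : 0 ≤ B P' N) (hPN' : 0 ≤ B P N') : 0 ≤ B (N - N') (N - N') := by
  have hdiff : N - N' = P' - P := by
    rw [sub_eq_sub_iff_add_eq_add, add_comm, hdec]
  calc 0 ≤ B P' N + B P N' := add_nonneg hP'N hPN'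
    _ = B (P' - P) (N - N') := by
      simp only [map_sub, sub_apply, hPN, hP'N']
      ring
    _ = B (N - N') (N - N') := by rw [← hdiff]

end LinearMap

theorem zariski_decomposition_unique_general
    {E : Type*} [AddCommGroup E] [Module ℝ E] (r : ℕ)
    (B : E →ₗ[ℝ] E →ₗ[ℝ] ℝ)
    (D : Fin r → E)
    (hnegdef : ∀ x ∈ Submodule.span ℝ (Set.range D), x ≠ 0 → B x x < 0)
    (P P' N N' : E)
    (hdec : P + N = P' + N')
    (hN : ∃ a : Fin r → ℝ, (∀ i, 0 ≤ a i) ∧ N = ∑ i, a i • D i)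
    (hN' : ∃ a : Fin r → ℝ, (∀ i, 0 ≤ a i) ∧ N' = ∑ i, a i • D i)
    (hP : ∀ i, 0 ≤ B P (D i)) (hP' : ∀ i, 0 ≤ B P' (D i))
    (hPN : B P N = 0) (hPN' : B P' N' = 0) :
    P = P' ∧ N = N' := by
  obtain ⟨a, ha, rfl⟩ := hN
  obtain ⟨b, hb, rfl⟩ := hN'
  have hNN' : ∑ i, a i • D i = ∑ i, b i • D i := by
    by_contra hne
    have hmem : ∑ i, a i • D i - ∑ i, b i • D i ∈ Submodule.span ℝ (Set.range D) :=
      sub_mem (Submodule.mem_span_range_iff_exists_fun ℝ |>.2 ⟨a, rfl⟩)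
        (Submodule.mem_span_range_iff_exists_fun ℝ |>.2 ⟨b, rfl⟩)
    exact (hnegdef _ hmem (sub_ne_zero.2 hne)).not_ge <|
      B.self_apply_sub_nonneg_of_add_eq_add hdec hPN hPN'
        ((B P').apply_sum_smul_nonneg ha hP') ((B P).apply_sum_smul_nonneg hb hP)
  exact ⟨add_right_cancel (hNN' ▸ hdec), hNN'⟩

theorem zariski_decomposition_unique
    {E : Type*} [AddCommGroup E] [Module ℝ E] (m r : ℕ)
    (B : E →ₗ[ℝ] E →ₗ[ℝ] ℝ)
    (hsymm : ∀ x y : E, B x y = B y x)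
    (hsig : ∃ e : Module.Basis (Fin (m + 1)) ℝ E,
      (∀ i j, i ≠ j → B (e i) (e j) = 0) ∧
      0 < B (e 0) (e 0) ∧ ∀ i, i ≠ 0 → B (e i) (e i) < 0)
    (D : Fin r → E)
    (hnegdef : ∀ x ∈ Submodule.span ℝ (Set.range D), x ≠ 0 → B x x < 0)
    (hDij : ∀ i j, i ≠ j → 0 ≤ B (D i) (D j))
    (P P' N N' : E)
    (hdec : P + N = P' + N')
    (hN : ∃ a : Fin r → ℝ, (∀ i, 0 ≤ a i) ∧ N = ∑ i, a i • D i)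
    (hN' : ∃ a : Fin r → ℝ, (∀ i, 0 ≤ a i) ∧ N' = ∑ i, a i • D i)
    (hP : ∀ i, 0 ≤ B P (D i)) (hP' : ∀ i, 0 ≤ B P' (D i))
    (hPN : B P N = 0) (hPN' : B P' N' = 0) :
    P = P' ∧ N = N' :=
  zariski_decomposition_unique_general r B D hnegdef P P' N N' hdec hN hN' hP hP' hPN hPN'
end
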